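/- An α-Stieltjes right-nonnegative definite sequence (s_j)_{j=0}^{κ} is α-Stieltjes right-positive definite (belongs to K^{>}_{q,κ,α}) if and only if the matrix s_0^{[k,α]} is nonsingular for every 0 ≤ k ≤ κ; in that case s_0^{[k,α]} is positive Hermitian for all k. -/

import Mathlib

/-!
For a sequence `w` with invertible `w₀` let `t` be its reciprocal sequence, so that the block
lower-triangular Toeplitz matrices `L(w)` and `L(t)` are mutually inverse. Comparing coefficients
in `t ⋆ w = δ = w ⋆ t` gives `[t_{j+k+1}] = -L(t) [w_{j+k+1}] L(t)ᴴ` and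
`[t_{j+k+2}] = -L(t) Δ L(t)ᴴ`, where `Δ` is the Schur complement of `w₀` in `[w_{j+k}]`.
The transform `u = s^{[1,α]}` satisfies `u_j = -s₀ t_{j+1} s₀` for `t` reciprocal to
`w = (s_j - α s_{j-1})_j`, and `u_{j+1} - α u_j = -s₀ t_{j+2} s₀` for `t` reciprocal to `s`.
So `H_n(u)` is *-congruent to `-α H_n(s) + K_n(s)`, and `-α H_n(u) + K_n(u)` to the Schur
complement of `s₀` in `H_{n+1}(s)`, which is definite exactly when `H_{n+1}(s)` is. Hence, for
invertible `s₀`, `s ∈ K^{≥}_{q,κ+1,α}` (resp. `K^{>}`) iff `u ∈ K^{≥}_{q,κ,α}` (resp. `K^{>}`), and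
induction on `κ` reduces both claims to: a nonnegative Hermitian `s₀` is positive Hermitian iff it
is invertible.
-/

open Matrix BigOperators ComplexOrder

def IsMP {m n : Type*} [Fintype m] [Fintype n] (A : Matrix m n ℂ) (B : Matrix n m ℂ) : Prop :=
  A * B * A = A ∧ B * A * B = B ∧ (A * B)ᴴ = A * B ∧ (B * A)ᴴ = B * A

open Classical in
noncomputable def mp {m n : Type*} [Fintype m] [Fintype n] (A : Matrix m n ℂ) : Matrix n m ℂ :=
  if h : ∃ B, IsMP A B then h.choose else 0

noncomputable def recip {p q : ℕ} (s : ℕ → Matrix (Fin p) (Fin q) ℂ) :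
    ℕ → Matrix (Fin q) (Fin p) ℂ
  | 0 => mp (s 0)
  | (j+1) => -(mp (s 0) * ∑ l : Fin (j+1), s (j+1 - l.val) * recip s l.val)
termination_by j => j
decreasing_by exact l.isLt

noncomputable def shiftA {p q : ℕ} (α : ℂ) (s : ℕ → Matrix (Fin p) (Fin q) ℂ) :
    ℕ → Matrix (Fin p) (Fin q) ℂ
  | 0 => s 0
  | (j+1) => (-α) • s j + s (j+1)

noncomputable def recipA {p q : ℕ} (α : ℂ) (s : ℕ → Matrix (Fin p) (Fin q) ℂ) :
    ℕ → Matrix (Fin q) (Fin p) ℂ :=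
  recip (shiftA α s)

/-- the first α-Schur transform. -/
noncomputable def schur1 {p q : ℕ} (α : ℂ) (s : ℕ → Matrix (Fin p) (Fin q) ℂ) :
    ℕ → Matrix (Fin p) (Fin q) ℂ :=
  fun j => s 0 * (-(recipA α s (j + 1))) * s 0

/-- block Hankel matrix H_n = [s_{j+k}]_{j,k=0}^{n}. -/
def hankelMat {p q : ℕ} (s : ℕ → Matrix (Fin p) (Fin q) ℂ) (n : ℕ) :
    Matrix (Fin (n + 1) × Fin p) (Fin (n + 1) × Fin q) ℂ :=
  Matrix.of fun jk lm => s (jk.1.val + lm.1.val) jk.2 lm.2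

/-- block Hankel matrix K_n = [s_{j+k+1}]_{j,k=0}^{n}. -/
def hankelKMat {p q : ℕ} (s : ℕ → Matrix (Fin p) (Fin q) ℂ) (n : ℕ) :
    Matrix (Fin (n + 1) × Fin p) (Fin (n + 1) × Fin q) ℂ :=
  Matrix.of fun jk lm => s (jk.1.val + lm.1.val + 1) jk.2 lm.2

/-- the class K^{≥}_{q,κ,α} of α-Stieltjes right-nonnegative definite sequences. -/
def Kgg {q : ℕ} (α : ℝ) (κ : ℕ∞) (s : ℕ → Matrix (Fin q) (Fin q) ℂ) : Prop :=
  (∀ n : ℕ, ((2 * n : ℕ) : ℕ∞) ≤ κ → (hankelMat s n).PosSemidef) ∧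
  (∀ n : ℕ, ((2 * n + 1 : ℕ) : ℕ∞) ≤ κ →
    ((-(α : ℂ)) • hankelMat s n + hankelKMat s n).PosSemidef)

/-- the class K^{>}_{q,κ,α} of α-Stieltjes right-positive definite sequences. -/
def Kgt {q : ℕ} (α : ℝ) (κ : ℕ∞) (s : ℕ → Matrix (Fin q) (Fin q) ℂ) : Prop :=
  (∀ n : ℕ, ((2 * n : ℕ) : ℕ∞) ≤ κ → (hankelMat s n).PosDef) ∧
  (∀ n : ℕ, ((2 * n + 1 : ℕ) : ℕ∞) ≤ κ →
    ((-(α : ℂ)) • hankelMat s n + hankelKMat s n).PosDef)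

open Finset

section MoorePenrose

variable {m n : Type*} [Fintype m] [Fintype n]

theorem IsMP.unique {A : Matrix m n ℂ} {B C : Matrix n m ℂ} (hB : IsMP A B) (hC : IsMP A C) :
    B = C := by
  obtain ⟨hB1, hB2, hB3, hB4⟩ := hB
  obtain ⟨hC1, hC2, hC3, hC4⟩ := hC
  have hAB : A * B = A * C :=
    calc A * B = (A * B)ᴴ := hB3.symm
    _ = Bᴴ * (A * C * A)ᴴ := by rw [conjTranspose_mul, hC1]
    _ = (A * B)ᴴ * (A * C)ᴴ := by simp only [conjTranspose_mul, Matrix.mul_assoc]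
    _ = A * C := by rw [hB3, hC3, ← Matrix.mul_assoc (A * B) A C, hB1]
  have hBA : B * A = C * A :=
    calc B * A = (B * A)ᴴ := hB4.symm
    _ = (A * C * A)ᴴ * Bᴴ := by rw [conjTranspose_mul, hC1]
    _ = (C * A)ᴴ * (B * A)ᴴ := by simp only [conjTranspose_mul, Matrix.mul_assoc]
    _ = C * A := by rw [hB4, hC4, Matrix.mul_assoc C A (B * A), ← Matrix.mul_assoc A B A, hB1]
  calc B = B * A * B := hB2.symm
  _ = B * (A * C) := by rw [Matrix.mul_assoc, hAB]
  _ = C * A * C := by rw [← Matrix.mul_assoc, hBA]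
  _ = C := hC2

theorem mp_eq_of_isMP {A : Matrix m n ℂ} {B : Matrix n m ℂ} (h : IsMP A B) : mp A = B := by
  rw [mp, dif_pos ⟨B, h⟩]
  exact (Exists.choose_spec (⟨B, h⟩ : ∃ B, IsMP A B)).unique h

theorem mp_eq_nonsing_inv [DecidableEq n] {A : Matrix n n ℂ} (h : IsUnit A) : mp A = A⁻¹ := by
  have h1 : A * A⁻¹ = 1 := mul_nonsing_inv A ((isUnit_iff_isUnit_det A).mp h)
  have h2 : A⁻¹ * A = 1 := nonsing_inv_mul A ((isUnit_iff_isUnit_det A).mp h)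
  refine mp_eq_of_isMP ⟨by rw [h1, one_mul], by rw [mul_assoc, h1, mul_one], ?_, ?_⟩ <;>
    simp [h1, h2]

end MoorePenrose

theorem sum_fin_ite_le {M : Type*} [AddCommMonoid M] {N : ℕ} (j : Fin N) (F : ℕ → M) :
    ∑ a : Fin N, (if (a : ℕ) ≤ j then F a else 0) = ∑ a ∈ range (j + 1), F a := by
  rw [Fin.sum_univ_eq_sum_range (fun a => if a ≤ j then F a else 0), ← sum_filter]
  congr 1
  ext a
  simp only [mem_filter, mem_range]
  omega

theorem sum_range_ite_le {M : Type*} [AddCommMonoid M] (k n : ℕ) (F : ℕ → M) :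
    ∑ a ∈ range n, (if k ≤ a then F a else 0) = ∑ c ∈ range (n - k), F (k + c) := by
  rw [← sum_filter, ← sum_Ico_eq_sum_range]
  congr 1
  ext a
  simp only [mem_filter, mem_range, mem_Ico]
  omega

section Ring

variable {R : Type*} [Ring R]

def cauchy (f g : ℕ → R) (m : ℕ) : R := ∑ l ∈ range (m + 1), f (m - l) * g l

def lowerToeplitz (N : ℕ) (f : ℕ → R) : Matrix (Fin N) (Fin N) R :=
  of fun j k => if (k : ℕ) ≤ j then f (j - k) else 0

def upperToeplitz (N : ℕ) (f : ℕ → R) : Matrix (Fin N) (Fin N) R :=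
  of fun j k => if (j : ℕ) ≤ k then f (k - j) else 0

def hankel (f : ℕ → R) (N : ℕ) : Matrix (Fin N) (Fin N) R := of fun j k => f (j + k)

theorem lowerToeplitz_mul_lowerToeplitz (N : ℕ) (f g : ℕ → R) :
    lowerToeplitz N f * lowerToeplitz N g = lowerToeplitz N (cauchy f g) := by
  ext j k
  have hsummand : ∀ a : Fin N, lowerToeplitz N f j a * lowerToeplitz N g a k =
      if (a : ℕ) ≤ j then (if (k : ℕ) ≤ a then f (j - a) * g (a - k) else 0) else 0 := by
    intro a
    simp only [lowerToeplitz, of_apply]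
    split_ifs <;> simp
  rw [mul_apply, sum_congr rfl fun a _ => hsummand a,
    sum_fin_ite_le j fun a => if (k : ℕ) ≤ a then f (j - a) * g (a - k) else 0, sum_range_ite_le]
  simp only [lowerToeplitz, of_apply, cauchy]
  split_ifs with hkj
  · refine sum_congr (by congr 1; omega) fun c hc => ?_
    rw [mem_range] at hc
    congr 2 <;> omega
  · exact sum_eq_zero fun c hc => by simp only [mem_range] at hc; omega

theorem lowerToeplitz_single (N : ℕ) : lowerToeplitz N (Pi.single 0 1 : ℕ → R) = 1 := by
  ext j k
  simp only [lowerToeplitz, of_apply, one_apply, Pi.single_apply, Fin.ext_iff]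
  split_ifs <;> first | rfl | omega

theorem lowerToeplitz_congr {N : ℕ} {f g : ℕ → R} (h : ∀ m < N, f m = g m) :
    lowerToeplitz N f = lowerToeplitz N g := by
  ext j k
  simp only [lowerToeplitz, of_apply]
  split_ifs
  · exact h _ (by omega)
  · rfl

theorem apply_eq_of_lowerToeplitz_eq {N : ℕ} {f g : ℕ → R}
    (h : lowerToeplitz N f = lowerToeplitz N g) {m : ℕ} (hm : m < N) : f m = g m := by
  have := congrFun (congrFun h ⟨m, hm⟩) ⟨0, by omega⟩
  simpa [lowerToeplitz] using this

theorem lowerToeplitz_mul_mul_upperToeplitz_apply {N : ℕ} (f g : ℕ → R) (h : ℕ → ℕ → R)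
    (j k : Fin N) :
    (lowerToeplitz N f * of (fun a b : Fin N => h a b) * upperToeplitz N g) j k
      = ∑ a ∈ range (j + 1), ∑ b ∈ range (k + 1), f (j - a) * h a b * g (k - b) := by
  simp only [mul_apply, lowerToeplitz, upperToeplitz, of_apply, ite_mul, zero_mul, mul_ite,
    mul_zero, sum_mul]
  rw [sum_fin_ite_le k fun b => ∑ a : Fin N,
    if (a : ℕ) ≤ j then f (j - a) * h a b * g (k - b) else 0, sum_comm]
  simp_rw [← ite_sum_zero]
  exact sum_fin_ite_le j fun a => ∑ b ∈ range (k + 1), f (j - a) * h a b * g (k - b)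

theorem cauchy_eq_sum_reflect (f g : ℕ → R) (m : ℕ) :
    cauchy f g m = ∑ l ∈ range (m + 1), f l * g (m - l) := by
  rw [cauchy, ← sum_range_reflect]
  refine sum_congr rfl fun l hl => ?_
  rw [mem_range] at hl
  congr 2; omega

theorem eq_of_cauchy_eq_single {N : ℕ} {s t x : ℕ → R}
    (hts : ∀ m < N, cauchy t s m = (Pi.single 0 1 : ℕ → R) m)
    (hsx : ∀ m < N, cauchy s x m = (Pi.single 0 1 : ℕ → R) m) : ∀ m < N, x m = t m := by
  have hL : lowerToeplitz N x = lowerToeplitz N t :=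
    calc lowerToeplitz N x = lowerToeplitz N (cauchy t s) * lowerToeplitz N x := by
          rw [lowerToeplitz_congr hts, lowerToeplitz_single, one_mul]
      _ = lowerToeplitz N t * lowerToeplitz N (cauchy s x) := by
          rw [← lowerToeplitz_mul_lowerToeplitz, mul_assoc, lowerToeplitz_mul_lowerToeplitz]
      _ = lowerToeplitz N t := by
          rw [lowerToeplitz_congr hsx, lowerToeplitz_single, mul_one]
  exact fun m hm => apply_eq_of_lowerToeplitz_eq hL hm

/-- Matrices over a stably finite ring form a Dedekind-finite ring, so `L(f) L(g) = 1` forces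
`L(g) L(f) = 1`. -/
theorem cauchy_eq_single_comm [IsStablyFiniteRing R] {f g : ℕ → R}
    (h : cauchy f g = Pi.single 0 1) : cauchy g f = Pi.single 0 1 := by
  funext m
  have hfg : lowerToeplitz (m + 1) f * lowerToeplitz (m + 1) g = 1 := by
    rw [lowerToeplitz_mul_lowerToeplitz, h, lowerToeplitz_single]
  have hgf := mul_eq_one_comm.mp hfg
  rw [lowerToeplitz_mul_lowerToeplitz, ← lowerToeplitz_single] at hgf
  exact apply_eq_of_lowerToeplitz_eq hgf (Nat.lt_succ_self m)

def delay (f : ℕ → R) : ℕ → R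
  | 0 => 0
  | m + 1 => f m

theorem cauchy_delay_right (f g : ℕ → R) : cauchy f (delay g) = delay (cauchy f g) := by
  funext m
  cases m with
  | zero => simp [cauchy, delay]
  | succ m =>
    rw [cauchy, sum_range_succ', delay, mul_zero, add_zero, delay, cauchy]
    exact sum_congr rfl fun l _ => by rw [delay, Nat.add_sub_add_right]

theorem cauchy_delay_left (f g : ℕ → R) : cauchy (delay f) g = delay (cauchy f g) := by
  funext m
  cases m with
  | zero => simp [cauchy, delay]
  | succ m =>
    rw [cauchy, sum_range_succ, Nat.sub_self, delay, zero_mul, add_zero, delay, cauchy]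
    refine sum_congr rfl fun l hl => ?_
    rw [mem_range] at hl
    rw [show m + 1 - l = m - l + 1 by omega, delay]

variable {N : ℕ} {s t : ℕ → R}

theorem isUnit_lowerToeplitz (hst : cauchy s t = Pi.single 0 1)
    (hts : cauchy t s = Pi.single 0 1) : IsUnit (lowerToeplitz N t) :=
  ⟨⟨lowerToeplitz N t, lowerToeplitz N s,
    by rw [lowerToeplitz_mul_lowerToeplitz, hts, lowerToeplitz_single],
    by rw [lowerToeplitz_mul_lowerToeplitz, hst, lowerToeplitz_single]⟩, rfl⟩

theorem sum_mul_shift_eq_neg (hts : cauchy t s = Pi.single 0 1) (j b : ℕ) :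
    ∑ a ∈ range (j + 1), t (j - a) * s (a + b + 1)
      = -∑ c ∈ range (b + 1), t (j + 1 + c) * s (b - c) := by
  have h := congrFun hts (j + b + 1)
  rw [cauchy, show j + b + 1 + 1 = (b + 1) + (j + 1) by omega, sum_range_add,
    Pi.single_apply, if_neg (by omega)] at h
  rw [eq_neg_iff_add_eq_zero, add_comm, ← h, ← sum_range_reflect]
  congr 1 <;> refine sum_congr rfl fun c hc => ?_ <;> rw [mem_range] at hc <;> congr 2 <;> omega

theorem sum_shift_mul_eq_neg (hst : cauchy s t = Pi.single 0 1) (k : ℕ) :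
    ∑ b ∈ range (k + 1), s (b + 1) * t (k - b) = -(s 0 * t (k + 1)) := by
  have h := congrFun hst (k + 1)
  rw [cauchy_eq_sum_reflect, sum_range_succ', Pi.single_apply, if_neg (by omega)] at h
  rw [eq_neg_iff_add_eq_zero, ← h]
  simp only [Nat.add_sub_add_right, Nat.sub_zero]

theorem sum_sum_mul_hankel_one_eq (hst : cauchy s t = Pi.single 0 1)
    (hts : cauchy t s = Pi.single 0 1) (j k : ℕ) :
    ∑ a ∈ range (j + 1), ∑ b ∈ range (k + 1), t (j - a) * s (a + b + 1) * t (k - b)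
      = -t (j + k + 1) := by
  set f : ℕ → ℕ → R := fun c l => t (j + 1 + c) * s l * t (k - c - l)
  calc _ = ∑ b ∈ range (k + 1), (∑ a ∈ range (j + 1), t (j - a) * s (a + b + 1)) * t (k - b) := by
        rw [sum_comm]
        simp_rw [sum_mul]
    _ = -∑ b ∈ range (k + 1), ∑ c ∈ range (b + 1), f c (b - c) := by
        simp_rw [sum_mul_shift_eq_neg hts, neg_mul, sum_neg_distrib, sum_mul]
        congr 1
        refine sum_congr rfl fun b _ => sum_congr rfl fun c hc => ?_
        rw [mem_range] at hc
        simp only [f]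
        congr 2
        omega
    _ = -∑ c ∈ range (k + 1), t (j + 1 + c) * cauchy s t (k - c) := by
        rw [sum_range_diag_flip]
        congr 1
        refine sum_congr rfl fun c hc => ?_
        rw [mem_range] at hc
        rw [cauchy_eq_sum_reflect, mul_sum, show k - c + 1 = k + 1 - c by omega]
        simp only [f, mul_assoc]
    _ = -t (j + k + 1) := by
        rw [hst, sum_eq_single k (fun c hc hck => by
          rw [mem_range] at hc
          rw [Pi.single_apply, if_neg (by omega), mul_zero]) (by simp)]
        simp [add_right_comm]

theorem sum_sum_mul_hankel_two_eq (hst : cauchy s t = Pi.single 0 1)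
    (hts : cauchy t s = Pi.single 0 1) (j k : ℕ) :
    ∑ a ∈ range (j + 1), ∑ b ∈ range (k + 1),
      t (j - a) * (s (a + b + 2) - s (a + 1) * t 0 * s (b + 1)) * t (k - b) = -t (j + k + 2) := by
  have hcol : ∑ a ∈ range (j + 1), t (j - a) * s (a + 1) = -(t (j + 1) * s 0) := by
    simpa using sum_mul_shift_eq_neg hts j 0
  have hs0t0 : s 0 * t 0 = 1 := by simpa [cauchy] using congrFun hst 0
  have hmain : ∑ a ∈ range (j + 1), ∑ b ∈ range (k + 1), t (j - a) * s (a + b + 2) * t (k - b)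
      = -t (j + k + 2) + t (j + 1) * s 0 * t (k + 1) := by
    have h := sum_sum_mul_hankel_one_eq hst hts j (k + 1)
    simp_rw [sum_range_succ' _ (k + 1), sum_add_distrib, ← sum_mul, hcol, Nat.add_sub_add_right,
      Nat.sub_zero, show ∀ a b, a + (b + 1) + 1 = a + b + 2 from fun _ _ => by omega] at h
    rw [eq_sub_of_add_eq h, neg_mul, sub_neg_eq_add]
  have hcorr : ∑ a ∈ range (j + 1), ∑ b ∈ range (k + 1),
      t (j - a) * (s (a + 1) * t 0 * s (b + 1)) * t (k - b) = t (j + 1) * s 0 * t (k + 1) := by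
    calc _ = (∑ a ∈ range (j + 1), t (j - a) * s (a + 1)) * t 0
          * ∑ b ∈ range (k + 1), s (b + 1) * t (k - b) := by
          rw [sum_mul, sum_mul_sum]
          simp only [mul_assoc]
      _ = t (j + 1) * (s 0 * t 0) * s 0 * t (k + 1) := by
          rw [hcol, sum_shift_mul_eq_neg hst]
          noncomm_ring
      _ = t (j + 1) * s 0 * t (k + 1) := by rw [hs0t0, mul_one]
  simp_rw [mul_sub, sub_mul, sum_sub_distrib, hmain, hcorr]
  abel

theorem hankel_shift_one_eq (hst : cauchy s t = Pi.single 0 1)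
    (hts : cauchy t s = Pi.single 0 1) :
    hankel (fun m => t (m + 1)) N
      = -(lowerToeplitz N t * hankel (fun m => s (m + 1)) N * upperToeplitz N t) := by
  ext j k
  have h := lowerToeplitz_mul_mul_upperToeplitz_apply t t (fun a b => s (a + b + 1)) j k
  rw [sum_sum_mul_hankel_one_eq hst hts] at h
  simp only [hankel, of_apply] at h ⊢
  rw [Matrix.neg_apply, h, neg_neg]

/-- For `c = s₀⁻¹` this is the Schur complement of `s₀` in `hankel s (N + 1)`. -/
def hankelSchurCompl (s : ℕ → R) (c : R) (N : ℕ) : Matrix (Fin N) (Fin N) R :=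
  of fun a b => s (a + b + 2) - s (a + 1) * c * s (b + 1)

theorem hankel_shift_two_eq (hst : cauchy s t = Pi.single 0 1)
    (hts : cauchy t s = Pi.single 0 1) :
    hankel (fun m => t (m + 2)) N
      = -(lowerToeplitz N t * hankelSchurCompl s (t 0) N * upperToeplitz N t) := by
  ext j k
  have h := lowerToeplitz_mul_mul_upperToeplitz_apply t t
    (fun a b => s (a + b + 2) - s (a + 1) * t 0 * s (b + 1)) j k
  rw [sum_sum_mul_hankel_two_eq hst hts] at h
  simp only [hankel, hankelSchurCompl, of_apply] at h ⊢
  rw [Matrix.neg_apply, h, neg_neg]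

end Ring

section StarRing

variable {R : Type*} [Ring R] [StarRing R]

theorem conjTranspose_lowerToeplitz (N : ℕ) (f : ℕ → R) :
    (lowerToeplitz N f)ᴴ = upperToeplitz N fun m => star (f m) := by
  ext j k
  simp only [conjTranspose_apply, lowerToeplitz, upperToeplitz, of_apply]
  split_ifs <;> simp

theorem star_cauchy (f g : ℕ → R) (m : ℕ) :
    star (cauchy f g m) = cauchy (fun l => star (g l)) (fun l => star (f l)) m := by
  rw [cauchy, star_sum, cauchy_eq_sum_reflect]
  simp only [star_mul]

/-- `star ∘ t` is a left inverse of the Hermitian `s`, hence equals its right inverse `t`. -/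
theorem star_eq_of_cauchy_eq_single {N : ℕ} {s t : ℕ → R} (hst : cauchy s t = Pi.single 0 1)
    (hs : ∀ m < N, star (s m) = s m) : ∀ m < N, star (t m) = t m := by
  have hleft : ∀ m < N, cauchy (fun l => star (t l)) s m = (Pi.single 0 1 : ℕ → R) m := by
    intro m hm
    calc cauchy (fun l => star (t l)) s m = cauchy (fun l => star (t l)) (fun l => star (s l)) m :=
          sum_congr rfl fun l hl => by dsimp only; rw [hs l (by rw [mem_range] at hl; omega)]
      _ = star ((Pi.single 0 1 : ℕ → R) m) := by rw [← star_cauchy, hst]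
      _ = _ := by rw [Pi.single_apply]; split_ifs <;> simp
  exact fun m hm => (eq_of_cauchy_eq_single hleft (fun l _ => congrFun hst l) m hm).symm

theorem hankel_neg_conj_eq {N r : ℕ} {t : ℕ → R} {c : R} {Y : Matrix (Fin N) (Fin N) R}
    (hc : star c = c) (ht : ∀ m < N, star (t m) = t m)
    (hY : hankel (fun m => t (m + r)) N = -(lowerToeplitz N t * Y * upperToeplitz N t)) :
    hankel (fun m => -(c * t (m + r) * c)) N
      = scalar (Fin N) c * lowerToeplitz N t * Y * (scalar (Fin N) c * lowerToeplitz N t)ᴴ := by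
  have hU : (lowerToeplitz N t)ᴴ = upperToeplitz N t := by
    rw [conjTranspose_lowerToeplitz]
    ext j k
    simp only [upperToeplitz, of_apply]
    split_ifs
    · exact ht _ (by omega)
    · rfl
  have hD : (scalar (Fin N) c)ᴴ = scalar (Fin N) c := by
    simp [scalar_apply, diagonal_conjTranspose, hc]
  rw [conjTranspose_mul, hU, hD]
  calc _ = scalar (Fin N) c * (-hankel (fun m => t (m + r)) N) * scalar (Fin N) c := by
        ext j k
        simp [scalar_apply, diagonal_mul, mul_diagonal, hankel, mul_assoc]
    _ = _ := by rw [hY, neg_neg]; simp only [Matrix.mul_assoc]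

end StarRing

theorem posDef_submatrix_equiv_iff {𝕜 m n : Type*} [RCLike 𝕜] {M : Matrix n n 𝕜} (e : m ≃ n) :
    (M.submatrix e e).PosDef ↔ M.PosDef :=
  ⟨fun h => by simpa using h.submatrix e.symm.injective, fun h => h.submatrix e.injective⟩

section Congruence

variable {𝕜 n : Type*} [RCLike 𝕜] [Fintype n] [DecidableEq n]

def IsStarCongr (X Y : Matrix n n 𝕜) : Prop :=
  ∃ A : Matrix n n 𝕜, IsUnit A ∧ Y = A * X * Aᴴ

theorem IsStarCongr.posDef_iff {X Y : Matrix n n 𝕜} (h : IsStarCongr X Y) :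
    X.PosDef ↔ Y.PosDef := by
  obtain ⟨A, hA, rfl⟩ := h
  exact (IsUnit.posDef_star_right_conjugate_iff hA).symm

theorem IsStarCongr.posSemidef_iff {X Y : Matrix n n 𝕜} (h : IsStarCongr X Y) :
    X.PosSemidef ↔ Y.PosSemidef := by
  obtain ⟨A, hA, rfl⟩ := h
  exact (IsUnit.posSemidef_star_right_conjugate_iff hA).symm

theorem compRingEquiv_conjTranspose {I J R : Type*} [Fintype I] [Fintype J] [Semiring R]
    [StarRing R] (M : Matrix I I (Matrix J J R)) :
    compRingEquiv I J R Mᴴ = (compRingEquiv I J R M)ᴴ := by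
  ext ⟨i, k⟩ ⟨j, l⟩
  simp [compRingEquiv_apply, comp_apply, conjTranspose_apply]

theorem isStarCongr_compRingEquiv {I J : Type*} [Fintype I] [DecidableEq I] [Fintype J]
    [DecidableEq J] {A Y : Matrix I I (Matrix J J 𝕜)} (hA : IsUnit A) :
    IsStarCongr (compRingEquiv I J 𝕜 Y) (compRingEquiv I J 𝕜 (A * Y * Aᴴ)) :=
  ⟨compRingEquiv I J 𝕜 A, hA.map _, by rw [map_mul, map_mul, compRingEquiv_conjTranspose]⟩

theorem posDef_fromBlocks₁₁_iff {m : Type*} [Fintype m] [DecidableEq m] {A : Matrix m m 𝕜}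
    (B : Matrix m n 𝕜) (D : Matrix n n 𝕜) (hA : A.PosDef) :
    (fromBlocks A B Bᴴ D).PosDef ↔ (D - Bᴴ * A⁻¹ * B).PosDef := by
  let := hA.isUnit.invertible
  have hunit : IsUnit (fromBlocks A B Bᴴ D) ↔ IsUnit (D - Bᴴ * A⁻¹ * B) := by
    rw [isUnit_iff_isUnit_det, isUnit_iff_isUnit_det, det_fromBlocks₁₁, invOf_eq_nonsing_inv,
      IsUnit.mul_iff, and_iff_right ((isUnit_iff_isUnit_det A).mp hA.isUnit)]
  have hpsd := PosDef.fromBlocks₁₁ B D hA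
  exact ⟨fun h => (hpsd.mp h.posSemidef).posDef_iff_isUnit.mpr (hunit.mp h.isUnit),
    fun h => (hpsd.mpr h.posSemidef).posDef_iff_isUnit.mpr (hunit.mpr h.isUnit)⟩

end Congruence

section SchurTransform

variable {q : ℕ}

theorem recip_zero (s : ℕ → Matrix (Fin q) (Fin q) ℂ) : recip s 0 = mp (s 0) := by
  rw [recip]

theorem recip_succ (s : ℕ → Matrix (Fin q) (Fin q) ℂ) (j : ℕ) :
    recip s (j + 1) = -(mp (s 0) * ∑ l ∈ range (j + 1), s (j + 1 - l) * recip s l) := by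
  rw [recip, Fin.sum_univ_eq_sum_range (fun l => s (j + 1 - l) * recip s l) (j + 1)]

theorem shiftA_eq_sub_smul_delay (c : ℂ) (s : ℕ → Matrix (Fin q) (Fin q) ℂ) :
    shiftA c s = s - c • delay s := by
  funext m
  cases m with
  | zero => simp [shiftA, delay]
  | succ m => simp [shiftA, delay, sub_eq_add_neg, add_comm]

theorem schur1_apply (c : ℂ) (s : ℕ → Matrix (Fin q) (Fin q) ℂ) (m : ℕ) :
    schur1 c s m = -(s 0 * recip (shiftA c s) (m + 1) * s 0) := by
  simp only [schur1, recipA, mul_neg, neg_mul]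

theorem hankelMat_eq_compRingEquiv (s : ℕ → Matrix (Fin q) (Fin q) ℂ) (n : ℕ) :
    hankelMat s n = compRingEquiv (Fin (n + 1)) (Fin q) ℂ (hankel s (n + 1)) :=
  rfl

theorem neg_smul_hankelMat_add_hankelKMat (c : ℂ) (s : ℕ → Matrix (Fin q) (Fin q) ℂ) (n : ℕ) :
    (-c) • hankelMat s n + hankelKMat s n
      = compRingEquiv (Fin (n + 1)) (Fin q) ℂ (hankel (fun m => shiftA c s (m + 1)) (n + 1)) := by
  ext ⟨j, p⟩ ⟨k, p'⟩
  simp [hankelMat, hankelKMat, hankel, compRingEquiv_apply, comp_apply, shiftA]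

variable {s : ℕ → Matrix (Fin q) (Fin q) ℂ}

theorem cauchy_recip (h0 : IsUnit (s 0)) : cauchy s (recip s) = Pi.single 0 1 := by
  have hinv : s 0 * (s 0)⁻¹ = 1 := mul_nonsing_inv _ ((isUnit_iff_isUnit_det _).mp h0)
  funext m
  cases m with
  | zero => simp [cauchy, recip_zero, mp_eq_nonsing_inv h0, hinv]
  | succ m =>
    rw [cauchy, sum_range_succ, Nat.sub_self, recip_succ, mp_eq_nonsing_inv h0, mul_neg,
      ← Matrix.mul_assoc, hinv, Matrix.one_mul, add_neg_cancel, Pi.single_apply,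
      if_neg (Nat.succ_ne_zero m)]

theorem cauchy_recip_left (h0 : IsUnit (s 0)) : cauchy (recip s) s = Pi.single 0 1 :=
  cauchy_eq_single_comm (cauchy_recip h0)

theorem recip_zero_eq_inv (h0 : IsUnit (s 0)) : recip s 0 = (s 0)⁻¹ := by
  rw [recip_zero, mp_eq_nonsing_inv h0]

theorem recip_eq_sub_smul_delay (h0 : IsUnit (s 0)) (c : ℂ) :
    recip s = recip (shiftA c s) - c • delay (recip (shiftA c s)) := by
  set t := recip (shiftA c s)
  have hsx : cauchy s (t - c • delay t) = Pi.single 0 1 :=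
    calc cauchy s (t - c • delay t) = cauchy s t - c • cauchy s (delay t) := by
          funext m
          simp [cauchy, mul_sub, sum_sub_distrib, smul_sum]
      _ = cauchy (s - c • delay s) t := by
          rw [cauchy_delay_right, ← cauchy_delay_left]
          funext m
          simp [cauchy, sub_mul, sum_sub_distrib, smul_sum]
      _ = Pi.single 0 1 := by rw [← shiftA_eq_sub_smul_delay, cauchy_recip (by rwa [shiftA])]
  funext m
  exact (eq_of_cauchy_eq_single (N := m + 1) (fun l _ => congrFun (cauchy_recip_left h0) l)
    (fun l _ => congrFun hsx l) m (Nat.lt_succ_self m)).symm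

theorem shiftA_schur1_succ (h0 : IsUnit (s 0)) (c : ℂ) (m : ℕ) :
    shiftA c (schur1 c s) (m + 1) = -(s 0 * recip s (m + 2) * s 0) := by
  rw [congrFun (recip_eq_sub_smul_delay h0 c) (m + 2), shiftA, schur1_apply, schur1_apply]
  simp only [Pi.sub_apply, Pi.smul_apply, delay, mul_sub, sub_mul, smul_mul_assoc,
    mul_smul_comm, smul_neg, neg_smul]
  abel

theorem star_shiftA {α : ℝ} {N : ℕ} (hs : ∀ m < N, star (s m) = s m) :
    ∀ m < N, star (shiftA (α : ℂ) s m) = shiftA (α : ℂ) s m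
  | 0, h => by rw [shiftA]; exact hs 0 h
  | m + 1, h => by
    rw [shiftA, star_add, star_smul, hs m (by omega), hs (m + 1) h, star_neg, Complex.star_def,
      Complex.conj_ofReal]

variable {n : ℕ}

theorem isStarCongr_hankelMat_schur1 {α : ℝ} (h0 : IsUnit (s 0))
    (hs : ∀ m ≤ n, star (s m) = s m) :
    IsStarCongr ((-(α : ℂ)) • hankelMat s n + hankelKMat s n) (hankelMat (schur1 α s) n) := by
  have hw0 : IsUnit (shiftA (α : ℂ) s 0) := by rwa [shiftA]
  have hst := cauchy_recip hw0
  have hts := cauchy_recip_left hw0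
  have ht := star_eq_of_cauchy_eq_single (N := n + 1) hst
    (star_shiftA fun m hm => hs m (by omega))
  rw [neg_smul_hankelMat_add_hankelKMat, hankelMat_eq_compRingEquiv,
    show schur1 (α : ℂ) s = _ from funext (schur1_apply _ s),
    hankel_neg_conj_eq (hs 0 n.zero_le) ht (hankel_shift_one_eq hst hts)]
  exact isStarCongr_compRingEquiv ((h0.map _).mul (isUnit_lowerToeplitz hst hts))

theorem isStarCongr_hankelSchurCompl_schur1 (c : ℂ) (h0 : IsUnit (s 0))
    (hs : ∀ m ≤ n, star (s m) = s m) :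
    IsStarCongr (compRingEquiv (Fin (n + 1)) (Fin q) ℂ (hankelSchurCompl s (s 0)⁻¹ (n + 1)))
      ((-c) • hankelMat (schur1 c s) n + hankelKMat (schur1 c s) n) := by
  have hst := cauchy_recip h0
  have hts := cauchy_recip_left h0
  have ht := star_eq_of_cauchy_eq_single (N := n + 1) hst fun m hm => hs m (by omega)
  rw [neg_smul_hankelMat_add_hankelKMat, funext (shiftA_schur1_succ h0 c),
    hankel_neg_conj_eq (hs 0 n.zero_le) ht (hankel_shift_two_eq hst hts), recip_zero_eq_inv h0]
  exact isStarCongr_compRingEquiv ((h0.map _).mul (isUnit_lowerToeplitz hst hts))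

def headSumEquiv (n q : ℕ) : Fin q ⊕ (Fin (n + 1) × Fin q) ≃ Fin (n + 2) × Fin q where
  toFun := Sum.elim (fun p => (0, p)) fun x => (x.1.succ, x.2)
  invFun x := Fin.cases (Sum.inl x.2) (fun i => Sum.inr (i, x.2)) x.1
  left_inv := by rintro (p | ⟨i, p⟩) <;> rfl
  right_inv := by
    rintro ⟨i, p⟩
    cases i using Fin.cases <;> rfl

def hankelRow (s : ℕ → Matrix (Fin q) (Fin q) ℂ) (n : ℕ) : Matrix (Fin q) (Fin (n + 1) × Fin q) ℂ :=
  of fun p x => s (x.1 + 1) p x.2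

theorem conjTranspose_hankelRow (hs : ∀ m ≤ n + 1, star (s m) = s m) :
    (hankelRow s n)ᴴ = of fun x p => s (x.1 + 1) x.2 p := by
  ext ⟨a, p⟩ p'
  exact congrFun₂ (hs (a + 1) (by omega)) p p'

theorem hankelMat_succ_submatrix (hs : ∀ m ≤ n + 1, star (s m) = s m) :
    (hankelMat s (n + 1)).submatrix (headSumEquiv n q) (headSumEquiv n q)
      = fromBlocks (s 0) (hankelRow s n) (hankelRow s n)ᴴ
          (compRingEquiv (Fin (n + 1)) (Fin q) ℂ (hankel (fun m => s (m + 2)) (n + 1))) := by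
  rw [conjTranspose_hankelRow hs]
  ext (p | ⟨a, p⟩) (p' | ⟨b, p'⟩) <;>
    simp [hankelMat, hankelRow, hankel, headSumEquiv, compRingEquiv_apply, comp_apply,
      add_assoc, add_left_comm]

theorem hankelSchurCompl_eq (hs : ∀ m ≤ n + 1, star (s m) = s m) :
    compRingEquiv (Fin (n + 1)) (Fin q) ℂ (hankel (fun m => s (m + 2)) (n + 1))
        - (hankelRow s n)ᴴ * (s 0)⁻¹ * hankelRow s n
      = compRingEquiv (Fin (n + 1)) (Fin q) ℂ (hankelSchurCompl s (s 0)⁻¹ (n + 1)) := by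
  rw [conjTranspose_hankelRow hs]
  ext ⟨a, p⟩ ⟨b, p'⟩
  simp [hankel, hankelSchurCompl, hankelRow, compRingEquiv_apply, comp_apply, mul_apply]

theorem hankelMat_succ_posDef_iff (hs0 : (s 0).PosDef) (hs : ∀ m ≤ n + 1, star (s m) = s m) :
    (hankelMat s (n + 1)).PosDef
      ↔ (compRingEquiv (Fin (n + 1)) (Fin q) ℂ (hankelSchurCompl s (s 0)⁻¹ (n + 1))).PosDef := by
  rw [← posDef_submatrix_equiv_iff (headSumEquiv n q), hankelMat_succ_submatrix hs,
    posDef_fromBlocks₁₁_iff _ _ hs0, hankelSchurCompl_eq hs]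

theorem hankelMat_succ_posSemidef_iff (hs0 : (s 0).PosDef) (hs : ∀ m ≤ n + 1, star (s m) = s m) :
    (hankelMat s (n + 1)).PosSemidef
      ↔ (compRingEquiv (Fin (n + 1)) (Fin q) ℂ
          (hankelSchurCompl s (s 0)⁻¹ (n + 1))).PosSemidef := by
  let := hs0.isUnit.invertible
  rw [← posSemidef_submatrix_equiv (headSumEquiv n q), hankelMat_succ_submatrix hs,
    PosDef.fromBlocks₁₁ _ _ hs0, hankelSchurCompl_eq hs]

theorem hankelMat_zero_eq_submatrix (s : ℕ → Matrix (Fin q) (Fin q) ℂ) :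
    hankelMat s 0
      = (s 0).submatrix (Equiv.uniqueProd (Fin q) (Fin 1)) (Equiv.uniqueProd (Fin q) (Fin 1)) := by
  ext ⟨i, p⟩ ⟨j, p'⟩
  simp [hankelMat, Fin.val_eq_zero]

end SchurTransform

section StieltjesClasses

variable {q : ℕ} {α : ℝ} {s : ℕ → Matrix (Fin q) (Fin q) ℂ}

theorem Kgg_mono {κ κ' : ℕ∞} (h : Kgg α κ s) (hκ : κ' ≤ κ) : Kgg α κ' s :=
  ⟨fun n hn => h.1 n (hn.trans hκ), fun n hn => h.2 n (hn.trans hκ)⟩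

theorem Kgt_mono {κ κ' : ℕ∞} (h : Kgt α κ s) (hκ : κ' ≤ κ) : Kgt α κ' s :=
  ⟨fun n hn => h.1 n (hn.trans hκ), fun n hn => h.2 n (hn.trans hκ)⟩

theorem Kgg_of_Kgt {κ : ℕ∞} (h : Kgt α κ s) : Kgg α κ s :=
  ⟨fun n hn => (h.1 n hn).posSemidef, fun n hn => (h.2 n hn).posSemidef⟩

theorem Kgt_of_forall_le {κ : ℕ∞} (h : ∀ m : ℕ, (m : ℕ∞) ≤ κ → Kgt α m s) : Kgt α κ s :=
  ⟨fun n hn => (h _ hn).1 n le_rfl, fun n hn => (h _ hn).2 n le_rfl⟩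

theorem posDef_zero_of_Kgt {κ : ℕ∞} (h : Kgt α κ s) : (s 0).PosDef := by
  have h0 := h.1 0 (by simp)
  rwa [hankelMat_zero_eq_submatrix, posDef_submatrix_equiv_iff] at h0

theorem posSemidef_zero_of_Kgg {κ : ℕ∞} (h : Kgg α κ s) : (s 0).PosSemidef := by
  have h0 := h.1 0 (by simp)
  rwa [hankelMat_zero_eq_submatrix, posSemidef_submatrix_equiv] at h0

theorem Kgt_zero_of_posDef (h : (s 0).PosDef) : Kgt α 0 s := by
  refine ⟨fun n hn => ?_, fun n hn => absurd hn (by simp)⟩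
  obtain rfl : n = 0 := by simpa using hn
  rwa [hankelMat_zero_eq_submatrix, posDef_submatrix_equiv_iff]

theorem star_eq_of_hankelMat_isHermitian {m : ℕ} (h : (hankelMat s m).IsHermitian) :
    star (s (m + m)) = s (m + m) := by
  ext p p'
  exact h.apply (⟨m, m.lt_succ_self⟩, p) (⟨m, m.lt_succ_self⟩, p')

theorem star_eq_of_isHermitian_shift {m : ℕ}
    (h : ((-(α : ℂ)) • hankelMat s m + hankelKMat s m).IsHermitian)
    (heven : star (s (m + m)) = s (m + m)) : star (s (m + m + 1)) = s (m + m + 1) := by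
  have hshift : star (shiftA (α : ℂ) s (m + m + 1)) = shiftA (α : ℂ) s (m + m + 1) := by
    rw [neg_smul_hankelMat_add_hankelKMat] at h
    ext p p'
    exact h.apply (⟨m, m.lt_succ_self⟩, p) (⟨m, m.lt_succ_self⟩, p')
  rw [shiftA, star_add, star_smul, heven, star_neg, Complex.star_def, Complex.conj_ofReal] at hshift
  exact add_left_cancel hshift

theorem star_eq_of_Kgg {κ : ℕ} (hs : Kgg α κ s) : ∀ j ≤ κ, star (s j) = s j := by
  intro j hj
  have heven : ∀ m, 2 * m ≤ κ → star (s (m + m)) = s (m + m) := fun m hm =>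
    star_eq_of_hankelMat_isHermitian (hs.1 m (by exact_mod_cast hm)).isHermitian
  obtain ⟨m, rfl | rfl⟩ := Nat.even_or_odd' j
  · rw [two_mul]
    exact heven m hj
  · rw [two_mul]
    exact star_eq_of_isHermitian_shift (hs.2 m (by exact_mod_cast hj)).isHermitian
      (heven m (by omega))

variable {κ : ℕ}

theorem Kgg_schur1 (hs : Kgg α (κ + 1 : ℕ) s) (h0 : IsUnit (s 0)) :
    Kgg α κ (schur1 α s) := by
  have herm := star_eq_of_Kgg hs
  have hs0 := (posSemidef_zero_of_Kgg hs).posDef_iff_isUnit.mpr h0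
  refine ⟨fun n hn => ?_, fun n hn => ?_⟩
  · have hn : 2 * n ≤ κ := by exact_mod_cast hn
    exact (isStarCongr_hankelMat_schur1 h0 fun m hm => herm m (by omega)).posSemidef_iff.mp
      (hs.2 n (by exact_mod_cast (by omega : 2 * n + 1 ≤ κ + 1)))
  · have hn : 2 * n + 1 ≤ κ := by exact_mod_cast hn
    exact (isStarCongr_hankelSchurCompl_schur1 _ h0 fun m hm => herm m (by omega)).posSemidef_iff.1
      ((hankelMat_succ_posSemidef_iff hs0 fun m hm => herm m (by omega)).mp
        (hs.1 (n + 1) (by exact_mod_cast (by omega : 2 * (n + 1) ≤ κ + 1))))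

theorem Kgt_succ_iff_Kgt_schur1 (hs : Kgg α (κ + 1 : ℕ) s) (h0 : IsUnit (s 0)) :
    Kgt α (κ + 1 : ℕ) s ↔ Kgt α κ (schur1 α s) := by
  have herm := star_eq_of_Kgg hs
  have hs0 := (posSemidef_zero_of_Kgg hs).posDef_iff_isUnit.mpr h0
  have hH : ∀ n, 2 * n + 1 ≤ κ → ((hankelMat s (n + 1)).PosDef ↔
      ((-(α : ℂ)) • hankelMat (schur1 α s) n + hankelKMat (schur1 α s) n).PosDef) := fun n hn =>
    (hankelMat_succ_posDef_iff hs0 fun m hm => herm m (by omega)).trans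
      (isStarCongr_hankelSchurCompl_schur1 _ h0 fun m hm => herm m (by omega)).posDef_iff
  have hK : ∀ n, 2 * n ≤ κ → (((-(α : ℂ)) • hankelMat s n + hankelKMat s n).PosDef ↔
      (hankelMat (schur1 α s) n).PosDef) := fun n hn =>
    (isStarCongr_hankelMat_schur1 h0 fun m hm => herm m (by omega)).posDef_iff
  constructor
  · intro h
    refine ⟨fun n hn => ?_, fun n hn => ?_⟩
    · have hn : 2 * n ≤ κ := by exact_mod_cast hn
      exact (hK n hn).mp (h.2 n (by exact_mod_cast (by omega : 2 * n + 1 ≤ κ + 1)))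
    · have hn : 2 * n + 1 ≤ κ := by exact_mod_cast hn
      exact (hH n hn).mp (h.1 (n + 1) (by exact_mod_cast (by omega : 2 * (n + 1) ≤ κ + 1)))
  · intro h
    refine ⟨fun n hn => ?_, fun n hn => ?_⟩
    · have hn : 2 * n ≤ κ + 1 := by exact_mod_cast hn
      cases n with
      | zero => exact (Kgt_zero_of_posDef (α := α) hs0).1 0 le_rfl
      | succ n => exact (hH n (by omega)).mpr (h.2 n (by exact_mod_cast (by omega : 2 * n + 1 ≤ κ)))
    · have hn : 2 * n + 1 ≤ κ + 1 := by exact_mod_cast hn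
      exact (hK n (by omega)).mpr (h.1 n (by exact_mod_cast (by omega : 2 * n ≤ κ)))

end StieltjesClasses

theorem posDef_iterate_schur1_of_Kgt {q : ℕ} {α : ℝ} :
    ∀ {k : ℕ} {s : ℕ → Matrix (Fin q) (Fin q) ℂ}, Kgt α k s → ((schur1 (α : ℂ))^[k] s 0).PosDef
  | 0, _, h => posDef_zero_of_Kgt h
  | k + 1, _, h => by
    have h0 := (posDef_zero_of_Kgt h).isUnit
    rw [Function.iterate_succ_apply]
    exact posDef_iterate_schur1_of_Kgt ((Kgt_succ_iff_Kgt_schur1 (Kgg_of_Kgt h) h0).mp h)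

theorem Kgt_of_isUnit_iterate_schur1 {q : ℕ} {α : ℝ} :
    ∀ {κ : ℕ} {s : ℕ → Matrix (Fin q) (Fin q) ℂ}, Kgg α κ s →
      (∀ k ≤ κ, IsUnit ((schur1 (α : ℂ))^[k] s 0)) → Kgt α κ s
  | 0, _, hs, hU =>
    Kgt_zero_of_posDef ((posSemidef_zero_of_Kgg hs).posDef_iff_isUnit.mpr (hU 0 le_rfl))
  | κ + 1, s, hs, hU => by
    have h0 : IsUnit (s 0) := hU 0 κ.succ.zero_le
    refine (Kgt_succ_iff_Kgt_schur1 hs h0).mpr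
      (Kgt_of_isUnit_iterate_schur1 (Kgg_schur1 hs h0) fun k hk => ?_)
    simpa only [Function.iterate_succ_apply] using hU (k + 1) (by omega)

/-- Proposition 9.6: an α-Stieltjes right-nonnegative definite sequence is
    α-Stieltjes right-positive definite iff all matrices s_0^{[k,α]} are nonsingular;
    in that case they are positive Hermitian. -/
theorem stmt15 {q : ℕ} (α : ℝ) (κ : ℕ∞)
    (s : ℕ → Matrix (Fin q) (Fin q) ℂ) (hs : Kgg α κ s) :
    (Kgt α κ s ↔ ∀ k : ℕ, (k : ℕ∞) ≤ κ → IsUnit ((schur1 (α : ℂ))^[k] s 0)) ∧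
    (Kgt α κ s → ∀ k : ℕ, (k : ℕ∞) ≤ κ → ((schur1 (α : ℂ))^[k] s 0).PosDef) := by
  have hpos : Kgt α κ s → ∀ k : ℕ, (k : ℕ∞) ≤ κ → ((schur1 (α : ℂ))^[k] s 0).PosDef :=
    fun h k hk => posDef_iterate_schur1_of_Kgt (Kgt_mono h hk)
  refine ⟨⟨fun h k hk => (hpos h k hk).isUnit, fun hU => ?_⟩, hpos⟩
  exact Kgt_of_forall_le fun m hm => Kgt_of_isUnit_iterate_schur1 (Kgg_mono hs hm)
    fun k hk => hU k ((Nat.cast_le.mpr hk).trans hm)
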